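/- arXiv:cs/0205062 — 4 statements merged into one kernel-verified Lean document; each statement's English description precedes it below -/
import Mathlib

section
/- For positive reals v_1 ≥ v_2 ≥ ... ≥ v_k > 0 with v_1 ≤ v_2 + ... + v_k, and for any natural number d ≥ 2, one has (v_1)^(1/d) + ... + (v_k)^(1/d) ≥ (2(v_1 + ... + v_k))^(1/d). -/
/-!
Let `T = ∑ vᵢ` and `M = T / 2`. The domination hypothesis together with monotonicity gives
`vᵢ ≤ M` for every `i`, and for `p = 1 / d ≤ 1` this yields
`vᵢ ^ p = vᵢ · vᵢ ^ (p - 1) ≥ vᵢ · M ^ (p - 1)`.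
Summing, `∑ vᵢ ^ p ≥ T · M ^ (p - 1) = 2 M ^ p`, while `(2T) ^ p = 4 ^ p M ^ p ≤ 2 M ^ p`
because `p ≤ 1 / 2`.
-/

open Finset

theorem Real.mul_rpow_sub_one_le_rpow {x M p : ℝ} (hx : 0 < x) (hxM : x ≤ M) (hp : p ≤ 1) :
    x * M ^ (p - 1) ≤ x ^ p :=
  calc x * M ^ (p - 1) ≤ x * x ^ (p - 1) :=
        mul_le_mul_of_nonneg_left (Real.rpow_le_rpow_of_nonpos hx hxM (by linarith)) hx.le
    _ = x ^ p := by rw [Real.rpow_sub_one hx.ne', mul_div_cancel₀ _ hx.ne']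

theorem Real.sum_mul_rpow_sub_one_le_sum_rpow {ι : Type*} (s : Finset ι) (w : ι → ℝ) {M p : ℝ}
    (hw : ∀ i ∈ s, 0 < w i) (hwM : ∀ i ∈ s, w i ≤ M) (hp : p ≤ 1) :
    (∑ i ∈ s, w i) * M ^ (p - 1) ≤ ∑ i ∈ s, w i ^ p := by
  rw [sum_mul]
  exact sum_le_sum fun i hi => Real.mul_rpow_sub_one_le_rpow (hw i hi) (hwM i hi) hp

theorem Real.rpow_four_mul_le_two_mul_rpow {M p : ℝ} (hM : 0 ≤ M) (hp : p ≤ 1 / 2) :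
    (4 * M) ^ p ≤ 2 * M ^ p := by
  have h4 : (4 : ℝ) ^ p ≤ 2 :=
    calc (4 : ℝ) ^ p ≤ 4 ^ (1 / 2 : ℝ) := Real.rpow_le_rpow_of_exponent_le (by norm_num) hp
      _ = 2 := by
        rw [← Real.sqrt_eq_rpow, show (4 : ℝ) = 2 ^ 2 by norm_num, Real.sqrt_sq zero_le_two]
  rw [Real.mul_rpow (by norm_num) hM]
  gcongr

theorem Real.rpow_two_mul_sum_le_sum_rpow {ι : Type*} [Fintype ι] [Nonempty ι] (w : ι → ℝ)
    (hw : ∀ i, 0 < w i) (hhalf : ∀ i, 2 * w i ≤ ∑ j, w j) {p : ℝ} (hp : p ≤ 1 / 2) :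
    (2 * ∑ i, w i) ^ p ≤ ∑ i, w i ^ p := by
  set T := ∑ i, w i
  have hT : 0 < T := sum_pos (fun i _ => hw i) univ_nonempty
  have hM : 0 < T / 2 := half_pos hT
  calc (2 * T) ^ p = (4 * (T / 2)) ^ p := by ring_nf
    _ ≤ 2 * (T / 2) ^ p := Real.rpow_four_mul_le_two_mul_rpow hM.le hp
    _ = T * (T / 2) ^ (p - 1) := by
        rw [Real.rpow_sub_one hM.ne']
        field_simp [hT.ne']
    _ ≤ ∑ i, w i ^ p :=
        Real.sum_mul_rpow_sub_one_le_sum_rpow univ w (fun i _ => hw i)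
          (fun i _ => by linarith [hhalf i]) (by linarith)

theorem two_mul_le_sum_of_le_sum_erase {ι : Type*} [Fintype ι] [DecidableEq ι] (w : ι → ℝ)
    (i₀ : ι) (hmax : ∀ j, w j ≤ w i₀) (hdom : w i₀ ≤ ∑ i ∈ univ.erase i₀, w i) (j : ι) :
    2 * w j ≤ ∑ i, w i := by
  rw [← add_sum_erase _ _ (mem_univ i₀)]
  linarith [hmax j]

theorem weight_inequality_roots (k d : ℕ) (hk : 2 ≤ k) (hd : 2 ≤ d)
    (v : Fin k → ℝ) (hpos : ∀ i, 0 < v i)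
    (hmono : ∀ i j : Fin k, i ≤ j → v j ≤ v i)
    (hdom : v ⟨0, by omega⟩ ≤ ∑ i ∈ Finset.univ.erase ⟨0, by omega⟩, v i) :
    (2 * ∑ i, v i) ^ ((1 : ℝ) / d) ≤ ∑ i, (v i) ^ ((1 : ℝ) / d) := by
  have : Nonempty (Fin k) := ⟨⟨0, by omega⟩⟩
  have hhalf := two_mul_le_sum_of_le_sum_erase v _ (fun j => hmono _ j (Nat.zero_le j.val)) hdom
  refine Real.rpow_two_mul_sum_le_sum_rpow v hpos hhalf ?_
  gcongr
  exact_mod_cast hd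
end

section
/- Let L be a full-rank lattice in R^d with successive minima λ_1 ≤ ... ≤ λ_d with respect to the Euclidean ball. Then every ball in R^d that contains no point of L in its interior has radius R satisfying R^2 ≤ (1/4)(λ_1^2 + ... + λ_d^2). -/
/-! Take `d` linearly independent lattice vectors `v i` with `‖v i‖ ≤ λᵢ`; one exists for each
`i` in turn, because `i + 1` independent lattice vectors of norm `≤ λᵢ` cannot all lie in the span
of the `i` vectors chosen before. Babai's nearest-plane rounding then finds, for every point `x`
of the real span of `v`, a point `y` of the integer span with `‖x - y‖² ≤ (1/4) ∑ ‖v i‖²`: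
round the coefficient of `v 0` to the nearest integer (an error of at most `‖v 0‖ / 2`),
project orthogonally onto the span of the remaining vectors and recurse; the errors are
orthogonal, so their squares add up. Applied to the centre of a lattice-point-free ball, this
bounds its radius. -/

open Set Submodule

theorem LinearIndependent.exists_notMem_span_range_of_card_lt {K V ι ι' : Type*} [DivisionRing K]
    [AddCommGroup V] [Module K V] [Fintype ι] [Fintype ι'] {w : ι → V}
    (hw : LinearIndependent K w) (v : ι' → V) (hcard : Fintype.card ι' < Fintype.card ι) :
    ∃ j, w j ∉ span K (range v) := by
  by_contra! hsub
  have hle : span K (range w) ≤ span K (range v) := span_le.2 (range_subset_iff.2 hsub)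
  have := FiniteDimensional.span_of_finite K (finite_range v)
  have hrank := finrank_mono hle
  rw [finrank_span_eq_card hw] at hrank
  exact (hrank.trans (finrank_range_le_card v)).not_gt hcard

theorem exists_linearIndependent_forall_norm_le {E : Type*} [SeminormedAddCommGroup E]
    [Module ℝ E] (S : Set E) {k : ℕ} (r : Fin k → ℝ)
    (hr : ∀ i : Fin k, ∃ w : Fin (i.val + 1) → E,
      (∀ j, w j ∈ S) ∧ LinearIndependent ℝ w ∧ ∀ j, ‖w j‖ ≤ r i) :
    ∃ v : Fin k → E, (∀ j, v j ∈ S) ∧ LinearIndependent ℝ v ∧ ∀ j, ‖v j‖ ≤ r j := by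
  induction k with
  | zero => exact ⟨Fin.elim0, fun j => j.elim0, linearIndependent_empty_type, fun j => j.elim0⟩
  | succ k ih =>
    obtain ⟨v, hvS, hv, hvr⟩ := ih (r ∘ Fin.castSucc) fun i => hr i.castSucc
    obtain ⟨w, hwS, hw, hwr⟩ := hr (Fin.last k)
    obtain ⟨j, hj⟩ := hw.exists_notMem_span_range_of_card_lt v (by simp)
    refine ⟨Fin.snoc v (w j), Fin.lastCases ?_ ?_, linearIndependent_finSnoc.2 ⟨hv, hj⟩,
      Fin.lastCases ?_ ?_⟩
    · simpa using hwS j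
    · simpa using hvS
    · simpa using hwr j
    · simpa using hvr

theorem Submodule.norm_sub_sq_eq_norm_sub_starProjection_sq_add {E : Type*}
    [NormedAddCommGroup E] [InnerProductSpace ℝ E] (K : Submodule ℝ E)
    [K.HasOrthogonalProjection] (x : E) {q : E} (hq : q ∈ K) :
    ‖x - q‖ ^ 2 = ‖x - K.starProjection x‖ ^ 2 + ‖K.starProjection x - q‖ ^ 2 := by
  have horth : inner ℝ (x - K.starProjection x) (K.starProjection x - q) = 0 :=
    (K.mem_orthogonal' _).1 (K.sub_starProjection_mem_orthogonal x) _
      (K.sub_mem (K.starProjection_apply_mem x) hq)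
  rw [← sub_add_sub_cancel x (K.starProjection x) q, norm_add_sq_real, horth]
  ring

theorem norm_sub_round_smul_sq_le {E : Type*} [SeminormedAddCommGroup E] [NormedSpace ℝ E]
    (t : ℝ) (u : E) : ‖(t - round t) • u‖ ^ 2 ≤ ‖u‖ ^ 2 / 4 := by
  have hfrac : (t - round t) ^ 2 ≤ (1 / 2) ^ 2 := by
    simpa only [sq_abs] using pow_le_pow_left₀ (abs_nonneg _) (abs_sub_round t) 2
  rw [norm_smul, mul_pow, Real.norm_eq_abs, sq_abs]
  nlinarith [sq_nonneg ‖u‖]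

theorem exists_mem_span_int_norm_sub_sq_le {E : Type*} [NormedAddCommGroup E]
    [InnerProductSpace ℝ E] {n : ℕ} (v : Fin n → E) {x : E} (hx : x ∈ span ℝ (range v)) :
    ∃ y ∈ span ℤ (range v), ‖x - y‖ ^ 2 ≤ 1 / 4 * ∑ i, ‖v i‖ ^ 2 := by
  induction n generalizing x with
  | zero =>
    rw [range_eq_empty, span_empty, mem_bot] at hx
    exact ⟨0, zero_mem _, by simp [hx]⟩
  | succ n ih =>
    rw [Fin.range_fin_succ, span_insert] at hx ⊢
    obtain ⟨_, hs, h, hh, rfl⟩ := mem_sup.1 hx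
    obtain ⟨t, rfl⟩ := mem_span_singleton.1 hs
    set H := span ℝ (range (Fin.tail v))
    have := FiniteDimensional.span_of_finite ℝ (finite_range (Fin.tail v))
    set x' := (t - round t) • v 0 + h with hx'
    obtain ⟨y, hy, hxy⟩ := ih (Fin.tail v) (H.starProjection_apply_mem x')
    refine ⟨round t • v 0 + y, add_mem_sup (mem_span_singleton.2 ⟨round t, rfl⟩) hy, ?_⟩
    have hshift : t • v 0 + h - (round t • v 0 + y) = x' - y := by
      rw [hx', ← Int.cast_smul_eq_zsmul ℝ, sub_smul]
      abel
    have hround : ‖x' - h‖ ^ 2 ≤ ‖v 0‖ ^ 2 / 4 := by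
      simpa only [hx', add_sub_cancel_right] using norm_sub_round_smul_sq_le t (v 0)
    have hyH : y ∈ H := span_le_restrictScalars ℤ ℝ _ hy
    calc ‖t • v 0 + h - (round t • v 0 + y)‖ ^ 2
        = ‖x' - H.starProjection x'‖ ^ 2 + ‖H.starProjection x' - y‖ ^ 2 := by
          rw [hshift, H.norm_sub_sq_eq_norm_sub_starProjection_sq_add x' hyH]
      _ ≤ ‖x' - h‖ ^ 2 + 1 / 4 * ∑ i, ‖Fin.tail v i‖ ^ 2 := by
          rw [H.norm_sub_sq_eq_norm_sub_starProjection_sq_add x' hh]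
          gcongr
          exact le_add_of_nonneg_right (sq_nonneg _)
      _ ≤ 1 / 4 * ∑ i, ‖v i‖ ^ 2 := by
          rw [Fin.sum_univ_succ]
          simp only [Fin.tail]
          linarith

theorem lattice_free_ball_radius_bound_general (d : ℕ)
    (L : Submodule ℤ (EuclideanSpace ℝ (Fin d)))
    (lam : Fin d → ℝ)
    (hlam : ∀ i : Fin d, IsLeast {r : ℝ | 0 < r ∧
      ∃ w : Fin (i.val + 1) → EuclideanSpace ℝ (Fin d),
        (∀ j, w j ∈ L) ∧ LinearIndependent ℝ w ∧ ∀ j, ‖w j‖ ≤ r} (lam i))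
    (c : EuclideanSpace ℝ (Fin d)) (R : ℝ) (hR : 0 < R)
    (hfree : ∀ p ∈ L, p ∉ Metric.ball c R) :
    R ^ 2 ≤ (1 / 4) * ∑ i, (lam i) ^ 2 := by
  obtain ⟨v, hvL, hv, hvlam⟩ :=
    exists_linearIndependent_forall_norm_le (L : Set (EuclideanSpace ℝ (Fin d))) lam
      fun i => (hlam i).1.2
  have hspan : span ℝ (range v) = ⊤ := hv.span_eq_top_of_card_eq_finrank' (by simp)
  obtain ⟨y, hy, hcy⟩ := exists_mem_span_int_norm_sub_sq_le v (hspan ▸ mem_top : c ∈ _)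
  have hyL : y ∈ L := span_le.2 (range_subset_iff.2 hvL) hy
  have hRy : R ≤ ‖c - y‖ := by simpa [dist_eq_norm'] using hfree y hyL
  calc R ^ 2 ≤ ‖c - y‖ ^ 2 := pow_le_pow_left₀ hR.le hRy 2
    _ ≤ 1 / 4 * ∑ i, ‖v i‖ ^ 2 := hcy
    _ ≤ 1 / 4 * ∑ i, lam i ^ 2 := by gcongr with i; exact hvlam i

/-- The radius of any lattice-point-free open ball of a full-rank lattice `L` in `ℝ^d`
satisfies `R² ≤ (1/4) ∑ λᵢ²`, where the `λᵢ` are the successive minima of `L` with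
respect to the Euclidean unit ball. -/
theorem lattice_free_ball_radius_bound (d : ℕ)
    (b : Module.Basis (Fin d) ℝ (EuclideanSpace ℝ (Fin d)))
    (L : Submodule ℤ (EuclideanSpace ℝ (Fin d)))
    (hL : L = Submodule.span ℤ (Set.range ⇑b))
    (lam : Fin d → ℝ)
    (hlam : ∀ i : Fin d, IsLeast {r : ℝ | 0 < r ∧
      ∃ w : Fin (i.val + 1) → EuclideanSpace ℝ (Fin d),
        (∀ j, w j ∈ L) ∧ LinearIndependent ℝ w ∧ ∀ j, ‖w j‖ ≤ r} (lam i))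
    (c : EuclideanSpace ℝ (Fin d)) (R : ℝ) (hR : 0 < R)
    (hfree : ∀ p ∈ L, p ∉ Metric.ball c R) :
    R ^ 2 ≤ (1 / 4) * ∑ i, (lam i) ^ 2 :=
  lattice_free_ball_radius_bound_general d L lam hlam c R hR hfree
end

section
/- For the FFT graph F_n (n ≥ 1), let V be any nonempty subset of vertices and define δ(V) to be the number of vertices of V lying in layer 0 or layer n, plus the number of edges of F_n joining a vertex of V to a vertex not in V. Then |V| ≤ 2·δ(V)·log₂(δ(V)). -/
/-!
Induct on the top layer `m` of the sub-butterfly on layers `0, …, m`. Edges below layer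
`m` never change bit `m`, so the part of `A` below layer `m + 1` splits into sets `B₀, B₁` lying in
two disjoint copies of the smaller butterfly, and `δ(B₀) + δ(B₁) + c₀ + c₁ ≤ δ(A)`, where `c_b`
counts the cut edges from the top layer `T` of `A` down into copy `b`. Every vertex of `T` has a
down-neighbour in copy `b`, which is either outside `A` or one of the at most `δ(B_b)` vertices of
`B_b` in layer `m`, each lying below at most two vertices of `T`. Hence `|T| ≤ c_b + 2 δ(B_b)`;
choosing `b` with the smaller `δ(B_b)`, the identity `2x log₂ x + 2x = 2x log₂ (2x)` closes the
induction.
-/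

/-- The `2^n`-point FFT (butterfly) graph: vertices `(k, i)` with `0 ≤ k ≤ n`,
`0 ≤ i < 2^n`, and `(k, i)` joined to `(k+1, i)` and `(k+1, i XOR 2^k)` for `k < n`. -/
def fftGraph (n : ℕ) : SimpleGraph (Fin (n + 1) × Fin (2 ^ n)) :=
  SimpleGraph.fromRel (fun a b =>
    (b.1 : ℕ) = (a.1 : ℕ) + 1 ∧
      ((b.2 : ℕ) = (a.2 : ℕ) ∨ (b.2 : ℕ) = (a.2 : ℕ) ^^^ 2 ^ (a.1 : ℕ)))

open Finset Real

theorem Finset.card_le_card_add_mul_card {α β : Type*} [DecidableEq β] {f : α → β}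
    {S : Finset α} {C : Finset (α × β)} {B : Finset β} {k : ℕ}
    (hf : ∀ a ∈ S, (a, f a) ∈ C ∨ f a ∈ B) (hk : ∀ b ∈ B, #{a ∈ S | f a = b} ≤ k) : #S ≤ #C + k * #B := by
  classical
  calc #S ≤ #({a ∈ S | (a, f a) ∈ C} ∪ {a ∈ S | f a ∈ B}) := by
        rw [← filter_or]
        exact card_le_card fun a ha => mem_filter.2 ⟨ha, hf a ha⟩
    _ ≤ #{a ∈ S | (a, f a) ∈ C} + #{a ∈ S | f a ∈ B} := card_union_le _ _
    _ ≤ #C + k * #B := by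
      gcongr
      · exact card_le_card_of_injOn (fun a => (a, f a)) (fun a ha => (mem_filter.1 ha).2)
          fun a _ b _ h => congrArg Prod.fst h
      · refine card_le_mul_card_image_of_maps_to (fun a ha => (mem_filter.1 ha).2) k
          fun b hb => (card_le_card ?_).trans (hk b hb)
        exact filter_subset_filter _ (filter_subset _ _)

namespace Butterfly

abbrev Vertex (n : ℕ) := Fin (n + 1) × Fin (2 ^ n)

instance (n : ℕ) : DecidableRel (fftGraph n).Adj := fun a b =>
  decidable_of_iff _ (SimpleGraph.fromRel_adj _ a b).symm

variable {n m : ℕ}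

theorem adj_of_succ {v w : Vertex n} (h₁ : (w.1 : ℕ) = v.1 + 1)
    (h₂ : (w.2 : ℕ) = v.2 ∨ (w.2 : ℕ) = (v.2 : ℕ) ^^^ 2 ^ (v.1 : ℕ)) : (fftGraph n).Adj v w := by
  rw [fftGraph, SimpleGraph.fromRel_adj]
  exact ⟨fun h => by rw [h] at h₁; omega, Or.inl ⟨h₁, h₂⟩⟩

theorem testBit_xor_two_pow_of_ne {x k m : ℕ} (h : k ≠ m) :
    (x ^^^ 2 ^ k).testBit m = x.testBit m := by
  simp [Nat.testBit_xor, Nat.testBit_two_pow_of_ne h]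

theorem testBit_eq_of_adj {v w : Vertex n} (h : (fftGraph n).Adj v w)
    (hv : (v.1 : ℕ) ≤ m) (hw : (w.1 : ℕ) ≤ m) : (v.2 : ℕ).testBit m = (w.2 : ℕ).testBit m := by
  rw [fftGraph, SimpleGraph.fromRel_adj] at h
  rcases h.2 with ⟨h₁, h₂ | h₂⟩ | ⟨h₁, h₂ | h₂⟩
  · rw [h₂]
  · rw [h₂, testBit_xor_two_pow_of_ne (by omega)]
  · rw [h₂]
  · rw [h₂, testBit_xor_two_pow_of_ne (by omega)]

def flipBit {k : ℕ} (hk : k < n) (i : Fin (2 ^ n)) : Fin (2 ^ n) :=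
  ⟨i ^^^ 2 ^ k, Nat.xor_lt_two_pow i.isLt (Nat.pow_lt_pow_right one_lt_two hk)⟩

def up (hm : m < n) (v : Vertex n) : Vertex n := (⟨m + 1, by omega⟩, v.2)

def downTo (hm : m < n) (b : Bool) (v : Vertex n) : Vertex n :=
  (⟨m, by omega⟩, if (v.2 : ℕ).testBit m = b then v.2 else flipBit hm v.2)

theorem adj_up (hm : m < n) {v : Vertex n} (hv : (v.1 : ℕ) = m) :
    (fftGraph n).Adj v (up hm v) :=
  adj_of_succ (by simp [up, hv]) (Or.inl rfl)

theorem adj_downTo (hm : m < n) (b : Bool) {v : Vertex n} (hv : (v.1 : ℕ) = m + 1) :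
    (fftGraph n).Adj (downTo hm b v) v := by
  refine adj_of_succ hv ?_
  simp only [downTo, flipBit]
  split_ifs
  · exact Or.inl rfl
  · exact Or.inr (xor_cancel_right _ _).symm

theorem testBit_downTo (hm : m < n) (b : Bool) (v : Vertex n) :
    ((downTo hm b v).2 : ℕ).testBit m = b := by
  simp only [downTo, flipBit]
  split_ifs with h
  · exact h
  · simp only [Nat.testBit_xor, Nat.testBit_two_pow_self, Bool.xor_true]
    cases b <;> simp_all

theorem eq_or_eq_flipBit_of_downTo_eq (hm : m < n) {b : Bool} {v w : Vertex n}
    (h : downTo hm b v = w) : v.2 = w.2 ∨ v.2 = flipBit hm w.2 := by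
  subst h
  simp only [downTo]
  split_ifs
  · exact Or.inl rfl
  · exact Or.inr (Fin.ext (xor_cancel_right _ _).symm)

def layer (k : ℕ) (A : Finset (Vertex n)) : Finset (Vertex n) := {v ∈ A | (v.1 : ℕ) = k}

def half (m : ℕ) (b : Bool) (A : Finset (Vertex n)) : Finset (Vertex n) :=
  {v ∈ A | (v.1 : ℕ) ≤ m ∧ (v.2 : ℕ).testBit m = b}

def cut (m : ℕ) (A : Finset (Vertex n)) : Finset (Vertex n × Vertex n) :=
  {p | (fftGraph n).Adj p.1 p.2 ∧ (p.1.1 : ℕ) ≤ m ∧ (p.2.1 : ℕ) ≤ m ∧ p.1 ∈ A ∧ p.2 ∉ A}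

/-- The `δ` of `A` in the sub-butterfly on layers `0, …, m`. Layers `0` and `m` are counted
separately, so for `m = 0` layer `0` counts twice; this makes `m = 0` a valid base case. -/
def perimeter (m : ℕ) (A : Finset (Vertex n)) : ℕ :=
  #(layer 0 A) + #(layer m A) + #(cut m A)

def upCut (m : ℕ) (A : Finset (Vertex n)) : Finset (Vertex n × Vertex n) :=
  {p ∈ cut (m + 1) A | (p.1.1 : ℕ) ≤ m ∧ ¬(p.2.1 : ℕ) ≤ m}

def downCut (m : ℕ) (b : Bool) (A : Finset (Vertex n)) : Finset (Vertex n × Vertex n) :=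
  {p ∈ cut (m + 1) A | ¬(p.1.1 : ℕ) ≤ m ∧ (p.2.2 : ℕ).testBit m = b}

variable {A : Finset (Vertex n)}

theorem mem_cut {p : Vertex n × Vertex n} : p ∈ cut m A ↔
    (fftGraph n).Adj p.1 p.2 ∧ (p.1.1 : ℕ) ≤ m ∧ (p.2.1 : ℕ) ≤ m ∧ p.1 ∈ A ∧ p.2 ∉ A := by
  simp [cut]

theorem sum_card_layer_half {k : ℕ} (hk : k ≤ m) :
    ∑ b, #(layer k (half m b A)) = #(layer k A) := by
  rw [card_eq_sum_card_fiberwise (f := fun v => (v.2 : ℕ).testBit m) (t := univ)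
    (fun _ _ => mem_coe.2 (mem_univ _))]
  refine sum_congr rfl fun b _ => congrArg card ?_
  ext v
  simp only [layer, half, mem_filter]
  constructor
  · rintro ⟨⟨hA, -, hb⟩, hk'⟩
    exact ⟨⟨hA, hk'⟩, hb⟩
  · rintro ⟨⟨hA, hk'⟩, hb⟩
    exact ⟨⟨hA, by omega, hb⟩, hk'⟩

theorem card_eq_sum_card_half_add (hA : ∀ v ∈ A, (v.1 : ℕ) ≤ m + 1) :
    #A = ∑ b, #(half m b A) + #(layer (m + 1) A) := by
  rw [← card_filter_add_card_filter_not (s := A) (fun v => (v.1 : ℕ) ≤ m),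
    card_eq_sum_card_fiberwise (f := fun v => (v.2 : ℕ).testBit m) (t := univ)
      (fun _ _ => mem_coe.2 (mem_univ _))]
  congr 1
  · refine sum_congr rfl fun b _ => ?_
    rw [filter_filter]
    rfl
  · exact congrArg card (filter_congr fun v hv => by have := hA v hv; omega)

theorem card_layer_le_card_upCut_add (hm : m < n) :
    #(layer m A) ≤ #(upCut m A) + #(layer (m + 1) A) := by
  have key := card_le_card_add_mul_card (f := up hm) (S := layer m A) (C := upCut m A)
    (B := layer (m + 1) A) (k := 1) ?_ ?_
  · simpa using key
  · intro v hv
    obtain ⟨hvA, hvm⟩ := mem_filter.1 hv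
    by_cases hup : up hm v ∈ A
    · exact Or.inr (mem_filter.2 ⟨hup, rfl⟩)
    · refine Or.inl (mem_filter.2 ⟨mem_cut.2 ⟨adj_up hm hvm, ?_, le_rfl, hvA, hup⟩, ?_⟩)
      · exact hvm.trans_le m.le_succ
      · exact ⟨hvm.le, by simp [up]⟩
  · intro w _
    refine card_le_one.2 fun v hv v' hv' => ?_
    simp only [layer, mem_filter] at hv hv'
    have h2 : (up hm v).2 = (up hm v').2 := congrArg Prod.snd (hv.2.trans hv'.2.symm)
    exact Prod.ext (Fin.ext (by omega)) h2

theorem card_layer_succ_le (hm : m < n) (b : Bool) :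
    #(layer (m + 1) A) ≤ #(downCut m b A) + 2 * #(layer m (half m b A)) := by
  refine card_le_card_add_mul_card (f := downTo hm b) ?_ ?_
  · intro v hv
    obtain ⟨hvA, hvm⟩ := mem_filter.1 hv
    by_cases hdown : downTo hm b v ∈ A
    · exact Or.inr (mem_filter.2 ⟨mem_filter.2 ⟨hdown, le_rfl, testBit_downTo hm b v⟩, rfl⟩)
    · exact Or.inl (mem_filter.2 ⟨mem_cut.2 ⟨(adj_downTo hm b hvm).symm, hvm.le, m.le_succ, hvA,
        hdown⟩, hvm ▸ m.not_succ_le_self, testBit_downTo hm b v⟩)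
  · intro w _
    let u₁ : Vertex n := (⟨m + 1, by omega⟩, w.2)
    let u₂ : Vertex n := (⟨m + 1, by omega⟩, flipBit hm w.2)
    refine (card_le_card fun v hv => ?_).trans (card_le_two (a := u₁) (b := u₂))
    obtain ⟨hv, hvw⟩ := mem_filter.1 hv
    have hvm := (mem_filter.1 hv).2
    rcases eq_or_eq_flipBit_of_downTo_eq hm hvw with h | h
    · exact mem_insert.2 (Or.inl (Prod.ext (Fin.ext hvm) h))
    · exact mem_insert.2 (Or.inr (mem_singleton.2 (Prod.ext (Fin.ext hvm) h)))

theorem sum_card_cut_half_add_le :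
    ∑ b, #(cut m (half m b A)) + #(upCut m A) + ∑ b, #(downCut m b A) ≤ #(cut (m + 1) A) := by
  set s := cut (m + 1) A
  have hlow : ∑ b, #(cut m (half m b A)) ≤ #{p ∈ s | (p.1.1 : ℕ) ≤ m ∧ (p.2.1 : ℕ) ≤ m} := by
    rw [card_eq_sum_card_fiberwise (f := fun p => (p.1.2 : ℕ).testBit m) (t := univ)
      (fun _ _ => mem_coe.2 (mem_univ _))]
    refine sum_le_sum fun b _ => card_le_card fun p hp => ?_
    obtain ⟨hadj, h₁, h₂, h₁A, h₂A⟩ := mem_cut.1 hp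
    obtain ⟨h₁A, -, hb⟩ := mem_filter.1 h₁A
    have h₂A : p.2 ∉ A := fun h =>
      h₂A (mem_filter.2 ⟨h, h₂, testBit_eq_of_adj hadj h₁ h₂ ▸ hb⟩)
    exact mem_filter.2
      ⟨mem_filter.2 ⟨mem_cut.2 ⟨hadj, by omega, by omega, h₁A, h₂A⟩, h₁, h₂⟩, hb⟩
  have hup : #{p ∈ s | (p.1.1 : ℕ) ≤ m ∧ (p.2.1 : ℕ) ≤ m} + #(upCut m A) =
      #{p ∈ s | (p.1.1 : ℕ) ≤ m} := by
    rw [← card_filter_add_card_filter_not (s := {p ∈ s | (p.1.1 : ℕ) ≤ m})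
      (fun p => (p.2.1 : ℕ) ≤ m), filter_filter, filter_filter]
    rfl
  have hdown : ∑ b, #(downCut m b A) = #{p ∈ s | ¬(p.1.1 : ℕ) ≤ m} := by
    rw [card_eq_sum_card_fiberwise (f := fun p => (p.2.2 : ℕ).testBit m) (t := univ)
      (fun _ _ => mem_coe.2 (mem_univ _))]
    refine sum_congr rfl fun b _ => ?_
    rw [filter_filter]
    rfl
  have hs := card_filter_add_card_filter_not (s := s) (fun p => (p.1.1 : ℕ) ≤ m)
  omega

theorem card_layer_le_perimeter : #(layer m A) ≤ perimeter m A := by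
  unfold perimeter
  omega

theorem sum_perimeter_half_add_le (hm : m < n) :
    ∑ b, perimeter m (half m b A) + ∑ b, #(downCut m b A) ≤ perimeter (m + 1) A := by
  have h₀ := sum_card_layer_half (A := A) (Nat.zero_le m)
  have hₘ := sum_card_layer_half (A := A) (le_refl m)
  have hcut := sum_card_cut_half_add_le (A := A) (m := m)
  have hup := card_layer_le_card_upCut_add (A := A) hm
  simp only [perimeter, sum_add_distrib] at *
  omega

theorem two_le_perimeter (hmn : m ≤ n) (hA : A.Nonempty) (hAm : ∀ v ∈ A, (v.1 : ℕ) ≤ m) :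
    2 ≤ perimeter m A := by
  induction m generalizing A with
  | zero =>
    have h₀ : layer 0 A = A := filter_true_of_mem fun v hv => Nat.le_zero.1 (hAm v hv)
    have hcard := hA.card_pos
    simp only [perimeter, h₀]
    omega
  | succ m ih =>
    have hm : m < n := hmn
    have hstep := sum_perimeter_half_add_le (A := A) hm
    simp only [Fintype.sum_bool] at hstep
    by_cases hhalf : ∃ b, (half m b A).Nonempty
    · obtain ⟨b, hb⟩ := hhalf
      have := ih hm.le hb fun v hv => (mem_filter.1 hv).2.1
      cases b <;> omega
    · replace hhalf : ∀ b, half m b A = ∅ := fun b =>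
        not_nonempty_iff_eq_empty.1 fun h => hhalf ⟨b, h⟩
      obtain ⟨v, hv⟩ := hA
      have hvm : (v.1 : ℕ) = m + 1 := by
        by_contra hne
        have hv' : v ∈ half m ((v.2 : ℕ).testBit m) A :=
          mem_filter.2 ⟨hv, by have := hAm v hv; omega, rfl⟩
        simp [hhalf] at hv'
      have hdown : ∀ b, 1 ≤ #(downCut m b A) := fun b => by
        refine one_le_card.2 ⟨(v, downTo hm b v), mem_filter.2 ⟨mem_cut.2
          ⟨(adj_downTo hm b hvm).symm, hvm.le, m.le_succ, hv, fun h => ?_⟩,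
          hvm ▸ m.not_succ_le_self, testBit_downTo hm b v⟩⟩
        have : downTo hm b v ∈ half m b A := mem_filter.2 ⟨h, le_rfl, testBit_downTo hm b v⟩
        simp [hhalf] at this
      have := hdown true
      have := hdown false
      omega

noncomputable def isoBound (d : ℝ) : ℝ := 2 * d * logb 2 d

theorem one_le_logb_two_of_two_le {d : ℝ} (hd : 2 ≤ d) : 1 ≤ logb 2 d := by
  rw [← logb_self_eq_one one_lt_two]
  exact logb_le_logb_of_le one_lt_two two_pos hd

theorem mul_logb_le_mul_logb_of_le {a d : ℝ} (ha : 0 ≤ a) (had : a ≤ d) :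
    a * logb 2 a ≤ a * logb 2 d := by
  rcases ha.eq_or_lt with rfl | ha
  · simp
  · exact mul_le_mul_of_nonneg_left (logb_le_logb_of_le one_lt_two ha had) ha.le

theorem isoBound_natCast_nonneg (k : ℕ) : 0 ≤ isoBound k := by
  rcases k.eq_zero_or_pos with rfl | hk
  · simp [isoBound]
  · have : 0 ≤ logb 2 (k : ℝ) := logb_nonneg one_lt_two (by exact_mod_cast hk)
    unfold isoBound
    positivity

theorem isoBound_natCast_mono {a b : ℕ} (h : a ≤ b) : isoBound a ≤ isoBound b := by
  rcases a.eq_zero_or_pos with rfl | ha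
  · simpa [isoBound] using isoBound_natCast_nonneg b
  · have ha' : (1 : ℝ) ≤ a := by exact_mod_cast ha
    have hab : (a : ℝ) ≤ b := by exact_mod_cast h
    have hlog := mul_logb_le_mul_logb_of_le (by linarith) hab
    have hb : 0 ≤ logb 2 (b : ℝ) := logb_nonneg one_lt_two (by linarith)
    unfold isoBound
    nlinarith

theorem isoBound_add_isoBound_add_le {x y c₀ c₁ T δ : ℝ} (hx : 0 ≤ x) (hy : 0 ≤ y)
    (hc₀ : 0 ≤ c₀) (hc₁ : 0 ≤ c₁) (hδ : 2 ≤ δ) (hsum : x + y + c₀ + c₁ ≤ δ)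
    (hT₀ : T ≤ c₀ + 2 * x) (hT₁ : T ≤ c₁ + 2 * y) :
    isoBound x + isoBound y + T ≤ isoBound δ := by
  wlog hxy : x ≤ y generalizing x y c₀ c₁
  · linarith [this hy hx hc₁ hc₀ (by linarith) hT₁ hT₀ (le_of_not_ge hxy)]
  have hL := one_le_logb_two_of_two_le hδ
  have hdouble : 2 * x * logb 2 (2 * x) = 2 * x * logb 2 x + 2 * x := by
    rcases hx.eq_or_lt with rfl | hx
    · simp
    · rw [logb_mul two_ne_zero hx.ne', logb_self_eq_one one_lt_two]
      ring
  have hxδ := mul_logb_le_mul_logb_of_le (by linarith : 0 ≤ 2 * x) (by linarith : 2 * x ≤ δ)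
  have hyδ := mul_logb_le_mul_logb_of_le hy (by linarith : y ≤ δ)
  have hc : c₀ ≤ 2 * c₀ * logb 2 δ := by nlinarith
  have hsumL : (x + y + c₀) * logb 2 δ ≤ δ * logb 2 δ :=
    mul_le_mul_of_nonneg_right (by linarith) (by linarith)
  unfold isoBound
  nlinarith

theorem card_le_isoBound_perimeter (hmn : m ≤ n) (hAm : ∀ v ∈ A, (v.1 : ℕ) ≤ m) :
    (#A : ℝ) ≤ isoBound (perimeter m A) := by
  induction m generalizing A with
  | zero =>
    rcases A.eq_empty_or_nonempty with rfl | hA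
    · simpa using isoBound_natCast_nonneg _
    have h₀ : layer 0 A = A := filter_true_of_mem fun v hv => Nat.le_zero.1 (hAm v hv)
    have hcard : (#A : ℝ) ≤ perimeter 0 A := by
      exact_mod_cast h₀ ▸ card_layer_le_perimeter
    have hδ : (2 : ℝ) ≤ perimeter 0 A := by exact_mod_cast two_le_perimeter hmn hA hAm
    have hL := one_le_logb_two_of_two_le hδ
    unfold isoBound
    nlinarith
  | succ m ih =>
    rcases A.eq_empty_or_nonempty with rfl | hA
    · simpa using isoBound_natCast_nonneg _
    have hm : m < n := hmn
    have hδ := two_le_perimeter hmn hA hAm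
    have hcard := card_eq_sum_card_half_add hAm
    have hsum := sum_perimeter_half_add_le (A := A) hm
    have hT (b : Bool) :
        #(layer (m + 1) A) ≤ #(downCut m b A) + 2 * perimeter m (half m b A) :=
      (card_layer_succ_le hm b).trans <| by
        have := card_layer_le_perimeter (m := m) (A := half m b A)
        omega
    have hhalf (b : Bool) : (#(half m b A) : ℝ) ≤ isoBound (perimeter m (half m b A)) :=
      ih hm.le fun v hv => (mem_filter.1 hv).2.1
    simp only [Fintype.sum_bool] at hcard hsum
    have key := isoBound_add_isoBound_add_le (T := #(layer (m + 1) A)) (δ := perimeter (m + 1) A)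
      (Nat.cast_nonneg (perimeter m (half m false A)))
      (Nat.cast_nonneg (perimeter m (half m true A)))
      (Nat.cast_nonneg #(downCut m false A)) (Nat.cast_nonneg #(downCut m true A))
      (by exact_mod_cast hδ) (by exact_mod_cast (by omega : _ ≤ perimeter (m + 1) A))
      (by exact_mod_cast hT false) (by exact_mod_cast hT true)
    rw [hcard]
    push_cast
    linarith [hhalf true, hhalf false]

theorem ncard_boundary_eq (hn : 1 ≤ n) (F : Finset (Vertex n)) :
    {v | v ∈ (F : Set (Vertex n)) ∧ ((v.1 : ℕ) = 0 ∨ (v.1 : ℕ) = n)}.ncard =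
      #(layer 0 F) + #(layer n F) := by
  rw [layer, layer, ← card_union_of_disjoint (disjoint_filter.2 fun v _ h₀ hₙ => by omega),
    ← Set.ncard_coe_finset]
  congr 1
  ext v
  simp [and_or_left]

theorem card_cut_le_ncard (F : Finset (Vertex n)) :
    #(cut n F) ≤ {e | e ∈ (fftGraph n).edgeSet ∧
      ∃ x y, x ∈ (F : Set (Vertex n)) ∧ y ∉ (F : Set (Vertex n)) ∧ e = s(x, y)}.ncard := by
  rw [← Set.ncard_coe_finset]
  refine Set.ncard_le_ncard_of_injOn (fun p => s(p.1, p.2)) ?_ ?_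
  · intro p hp
    obtain ⟨hadj, -, -, h₁, h₂⟩ := mem_cut.1 hp
    exact ⟨hadj, p.1, p.2, h₁, h₂, rfl⟩
  · intro p hp q hq h
    rcases Sym2.eq_iff.1 h with ⟨h₁, h₂⟩ | ⟨h₁, -⟩
    · exact Prod.ext h₁ h₂
    · exact absurd (h₁ ▸ (mem_cut.1 hp).2.2.2.1) (mem_cut.1 hq).2.2.2.2

end Butterfly

open Butterfly

theorem fft_isoperimetric_general (n : ℕ) (hn : 1 ≤ n)
    (A : Set (Fin (n + 1) × Fin (2 ^ n)))
    (δ : ℕ)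
    (hδ : δ = {v | v ∈ A ∧ ((v.1 : ℕ) = 0 ∨ (v.1 : ℕ) = n)}.ncard +
      {e | e ∈ (fftGraph n).edgeSet ∧
        ∃ x y, x ∈ A ∧ y ∉ A ∧ e = s(x, y)}.ncard) :
    (A.ncard : ℝ) ≤ 2 * δ * Real.logb 2 δ := by
  obtain ⟨F, rfl⟩ := A.toFinite.exists_finset_coe
  have hperim : perimeter n F ≤ δ := by
    rw [hδ, perimeter, ncard_boundary_eq hn]
    exact Nat.add_le_add_left (card_cut_le_ncard F) _
  calc ((F : Set (Vertex n)).ncard : ℝ) = #F := by rw [Set.ncard_coe_finset]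
    _ ≤ isoBound (perimeter n F) := card_le_isoBound_perimeter le_rfl fun v _ => v.1.is_le
    _ ≤ isoBound δ := isoBound_natCast_mono hperim

/-- Isoperimetric inequality for the butterfly graph: for any nonempty vertex set `A`
in `F_n` (`n ≥ 1`), with `δ(A)` the number of vertices of `A` in layer `0` or `n` plus
the number of edges of `F_n` joining `A` to its complement, `|A| ≤ 2 δ(A) log₂ δ(A)`. -/
theorem fft_isoperimetric (n : ℕ) (hn : 1 ≤ n)
    (A : Set (Fin (n + 1) × Fin (2 ^ n))) (hA : A.Nonempty)
    (δ : ℕ)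
    (hδ : δ = {v | v ∈ A ∧ ((v.1 : ℕ) = 0 ∨ (v.1 : ℕ) = n)}.ncard +
      {e | e ∈ (fftGraph n).edgeSet ∧
        ∃ x y, x ∈ A ∧ y ∉ A ∧ e = s(x, y)}.ncard) :
    (A.ncard : ℝ) ≤ 2 * δ * Real.logb 2 δ :=
  fft_isoperimetric_general n hn A δ hδ
end

section
/- For reals a, b ≥ 1 and x with 0 ≤ x ≤ min(a, b), one has (a + b) log₂(a + b) − a log₂ a − b log₂ b ≥ x · log₂(1 + (a/b + b/a)/2) ≥ x. -/
/-- Convexity estimate used in the butterfly-graph isoperimetric induction: for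
`a, b ≥ 1` and `0 ≤ x ≤ min a b`,
`(a+b)log₂(a+b) − a log₂ a − b log₂ b ≥ x·log₂(1 + (a/b + b/a)/2) ≥ x`. -/
theorem entropy_convexity_estimate (a b x : ℝ) (ha : 1 ≤ a) (hb : 1 ≤ b)
    (hx0 : 0 ≤ x) (hx : x ≤ min a b) :
    x * Real.logb 2 (1 + (a / b + b / a) / 2) ≤
        (a + b) * Real.logb 2 (a + b) - a * Real.logb 2 a - b * Real.logb 2 b ∧
      x ≤ x * Real.logb 2 (1 + (a / b + b / a) / 2) := by
  have ha0 : (0:ℝ) < a := lt_of_lt_of_le one_pos ha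
  have hb0 : (0:ℝ) < b := lt_of_lt_of_le one_pos hb
  have hxa : x ≤ a := hx.trans (min_le_left a b)
  have hxb : x ≤ b := hx.trans (min_le_right a b)
  set L1 := Real.logb 2 (1 + a / b) with hL1
  set L2 := Real.logb 2 (1 + b / a) with hL2
  have h1pos : (0:ℝ) < 1 + a / b := by positivity
  have h2pos : (0:ℝ) < 1 + b / a := by positivity
  have hL1nn : 0 ≤ L1 := Real.logb_nonneg one_lt_two (by
    have : 0 ≤ a / b := by positivity
    linarith)
  have hL2nn : 0 ≤ L2 := Real.logb_nonneg one_lt_two (by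
    have : 0 ≤ b / a := by positivity
    linarith)
  -- key identity for the middle log term
  have harg : 1 + (a / b + b / a) / 2 = (1 + a / b) * (1 + b / a) / 2 := by
    field_simp
    ring
  have hmid : Real.logb 2 (1 + (a / b + b / a) / 2) = L1 + L2 - 1 := by
    rw [harg, Real.logb_div (by positivity) (by norm_num),
      Real.logb_mul (ne_of_gt h1pos) (ne_of_gt h2pos), Real.logb_self_eq_one one_lt_two]
  -- entropy difference identity
  have hd1 : Real.logb 2 (1 + b / a) = Real.logb 2 (a + b) - Real.logb 2 a := by
    rw [show (1 : ℝ) + b / a = (a + b) / a by field_simp,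
      Real.logb_div (by positivity) (ne_of_gt ha0)]
  have hd2 : Real.logb 2 (1 + a / b) = Real.logb 2 (a + b) - Real.logb 2 b := by
    rw [show (1 : ℝ) + a / b = (a + b) / b by field_simp; ring,
      Real.logb_div (by positivity) (ne_of_gt hb0)]
  have hdiff : (a + b) * Real.logb 2 (a + b) - a * Real.logb 2 a - b * Real.logb 2 b
      = a * L2 + b * L1 := by
    rw [hL1, hL2, hd1, hd2]; ring
  constructor
  · rw [hmid, hdiff]
    have t1 : x * L1 ≤ b * L1 := mul_le_mul_of_nonneg_right hxb hL1nn
    have t2 : x * L2 ≤ a * L2 := mul_le_mul_of_nonneg_right hxa hL2nn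
    nlinarith
  · rw [hmid]
    have hge : (2:ℝ) ≤ a / b + b / a := by
      have h : 0 ≤ (a - b) ^ 2 := sq_nonneg _
      rw [div_add_div _ _ (ne_of_gt hb0) (ne_of_gt ha0), le_div_iff₀ (by positivity)]
      nlinarith
    have hL : 1 ≤ L1 + L2 - 1 := by
      have : Real.logb 2 2 ≤ Real.logb 2 (1 + (a / b + b / a) / 2) := by
        apply Real.logb_le_logb_of_le one_lt_two (by norm_num)
        linarith
      rw [hmid] at this
      rwa [Real.logb_self_eq_one one_lt_two] at this
    nlinarith
end
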